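/- Let x ∈ ι(Ξ) satisfy the crossing property, i.e., inf_{0≤s≤h} (x_{τ(x)+s} − x_{τ(x)}) < 0 for all h > 0, where τ(x) := inf{s ≥ 0 : x_s ≤ 0}. Then for any sequence (x^n)_{n≥1} ⊂ ι(Ξ) converging to x in the Skorokhod M1 topology, one has λ_t(x^n) → λ_t(x) for all t ≥ 0 in a co-countable subset of [0,∞), where λ_t(x) := 1{τ(x) ≤ t}. -/

import Mathlib

open MeasureTheory ProbabilityTheory Filter Set
open scoped ENNReal NNReal Classical

noncomputable section

/-- The first hitting time of `(-∞, 0]` by the path `x` after time `0`,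
with value `∞` if the path never hits `(-∞, 0]`. -/
def hitTime (x : ℝ → ℝ) : ℝ≥0∞ :=
  ⨅ s ∈ {s : ℝ | 0 ≤ s ∧ x s ≤ 0}, ENNReal.ofReal s

/-- Membership in the set `𝕄` of càdlàg non-decreasing functions `ℓ : [-1, ∞) → ℝ`
(encoded as functions on `ℝ`) which vanish on `[-1, 0)` and satisfy `lim_{t → ∞} ℓ t ≤ 1`
(equivalently, `ℓ ≤ 1` everywhere, by monotonicity). -/
structure MemM (ℓ : ℝ → ℝ) : Prop where
  zero_on_neg : ∀ t : ℝ, -1 ≤ t → t < 0 → ℓ t = 0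
  mono : MonotoneOn ℓ (Set.Ici (-1 : ℝ))
  right_cont : ∀ t : ℝ, -1 ≤ t → ContinuousWithinAt ℓ (Set.Ici t) t
  le_one : ∀ t : ℝ, -1 ≤ t → ℓ t ≤ 1

/-- The Lévy distance `d` on `𝕄`. -/
def levyDist (ℓ ℓ' : ℝ → ℝ) : ℝ :=
  sInf {ε : ℝ | 0 < ε ∧ ∀ t : ℝ, 0 ≤ t → ℓ' t ≤ ℓ (t + ε) + ε ∧ ℓ (t - ε) - ε ≤ ℓ' t}

/-- The path `ℓ` stopped at time `t`. -/
def stopAt (ℓ : ℝ → ℝ) (t : ℝ) : ℝ → ℝ := fun s => ℓ (min t s)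

/-- The metric `d̂(ℓ, ℓ') = ∫₀^∞ e^{-s} (d(ℓ_{s∧·}, ℓ'_{s∧·}) ∧ 1) ds` on `𝕄`. -/
def dHat (ℓ ℓ' : ℝ → ℝ) : ℝ :=
  ∫ s in Set.Ioi (0 : ℝ), Real.exp (-s) * min (levyDist (stopAt ℓ s) (stopAt ℓ' s)) 1

/-- A process `B : ℝ → Ω → ℝ` (considered for times `t ≥ 0`) is a standard Brownian motion
under `P`: it starts at `0`, has a.s. continuous paths, independent increments, and Gaussian
increments `B t - B s ~ N(0, t - s)`. -/
structure IsStandardBM {Ω : Type*} [MeasurableSpace Ω] (P : Measure Ω) (B : ℝ → Ω → ℝ) :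
    Prop where
  meas : ∀ t : ℝ, Measurable (B t)
  init : ∀ᵐ ω ∂P, B 0 ω = 0
  cont : ∀ᵐ ω ∂P, ContinuousOn (fun t => B t ω) (Set.Ici (0 : ℝ))
  incr_law : ∀ s t : ℝ, 0 ≤ s → s ≤ t →
    P.map (fun ω => B t ω - B s ω) = gaussianReal 0 (Real.toNNReal (t - s))
  indep_incr : ∀ (n : ℕ) (τ : Fin (n + 1) → ℝ), Monotone τ → (∀ i, 0 ≤ τ i) →
    iIndepFun
      (fun i : Fin n => fun ω => B (τ i.succ) ω - B (τ i.castSucc) ω) P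

/-- The filtration generated by the family of Brownian motions `B i`, evaluated at time `t`. -/
def bmFiltration {Ω ι : Type*} [MeasurableSpace Ω] (B : ι → ℝ → Ω → ℝ) (t : ℝ) :
    MeasurableSpace Ω :=
  ⨆ (i : ι) (s : ℝ) (_ : 0 ≤ s) (_ : s ≤ t), MeasurableSpace.comap (B i s) inferInstance

/-- Set-up of the `N`-particle system: i.i.d. initial conditions `Z i` with common law `θ`
(supported on `[0,∞)`), independent standard Brownian motions `B i`, with the pairs
`(Z i, B i)` mutually independent and `Z i` independent of `B i`. -/
structure ParticleSetup (N : ℕ) {Ω : Type*} [MeasurableSpace Ω] (P : Measure Ω)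
    (θ : Measure ℝ) (Z : Fin N → Ω → ℝ) (B : Fin N → ℝ → Ω → ℝ) : Prop where
  isProb : IsProbabilityMeasure P
  z_meas : ∀ i, Measurable (Z i)
  z_law : ∀ i, P.map (Z i) = θ
  z_nonneg : ∀ i, ∀ᵐ ω ∂P, 0 ≤ Z i ω
  bm : ∀ i, IsStandardBM P (B i)
  indep_pairs : iIndepFun
    (fun i => fun ω => (Z i ω, fun t => B i t ω)) P
  indep_zb : ∀ i, IndepFun (Z i) (fun ω => (fun t => B i t ω) : Ω → ℝ → ℝ) P

/-- `(X, L)` is a solution of the interacting particle system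
`X^i_t = Z^i + β t + B^i_t − G(L_t)`, `L_t = (1/N) ∑_i 1{τ_i ≤ t}`. -/
structure IsParticleSolution (N : ℕ) (β : ℝ) (G : ℝ → ℝ) {Ω : Type*} [MeasurableSpace Ω]
    (P : Measure Ω) (Z : Fin N → Ω → ℝ) (B : Fin N → ℝ → Ω → ℝ)
    (X : Fin N → ℝ → Ω → ℝ) (L : Ω → ℝ → ℝ) : Prop where
  memM : ∀ᵐ ω ∂P, MemM (L ω)
  adapted : ∀ t : ℝ, 0 ≤ t → Measurable[bmFiltration B t] (fun ω => L ω t)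
  eqX : ∀ᵐ ω ∂P, ∀ i, ∀ t : ℝ, 0 ≤ t →
    X i t ω = Z i ω + β * t + B i t ω - G (L ω t)
  eqL : ∀ᵐ ω ∂P, ∀ t : ℝ, 0 ≤ t →
    L ω t = (N : ℝ)⁻¹ *
      (Finset.univ.filter fun i : Fin N =>
        hitTime (fun s => X i s ω) ≤ ENNReal.ofReal t).card

/-- Set-up for the McKean–Vlasov equation: an initial condition `Z ≥ 0` with law `θ` and an
independent standard Brownian motion `B`. -/
structure MVSetup {Ω : Type*} [MeasurableSpace Ω] (P : Measure Ω) (θ : Measure ℝ)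
    (Z : Ω → ℝ) (B : ℝ → Ω → ℝ) : Prop where
  isProb : IsProbabilityMeasure P
  z_meas : Measurable Z
  z_law : P.map Z = θ
  z_nonneg : ∀ᵐ ω ∂P, 0 ≤ Z ω
  bm : IsStandardBM P B
  indep : IndepFun Z (fun ω => (fun t => B t ω) : Ω → ℝ → ℝ) P

/-- `(X, Λ)` is a solution of the McKean–Vlasov equation
`X_t = Z + β t + B_t − G(Λ_t)`, `Λ_t = P(τ ≤ t)` with `τ = inf{t ≥ 0 : X_t ≤ 0}`. -/
structure IsMVSolution (β : ℝ) (G : ℝ → ℝ) {Ω : Type*} [MeasurableSpace Ω] (P : Measure Ω)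
    (Z : Ω → ℝ) (B : ℝ → Ω → ℝ) (X : ℝ → Ω → ℝ) (Λ : ℝ → ℝ) : Prop where
  memM : MemM Λ
  eqX : ∀ᵐ ω ∂P, ∀ t : ℝ, 0 ≤ t → X t ω = Z ω + β * t + B t ω - G (Λ t)
  eqΛ : ∀ t : ℝ, 0 ≤ t →
    Λ t = (P {ω | hitTime (fun s => X s ω) ≤ ENNReal.ofReal t}).toReal


/-- The left-limit value used in the completed graph of a càdlàg path on `[a, ∞)`
(at the left endpoint `a` we use the value itself). -/
def leftVal (a : ℝ) (x : ℝ → ℝ) (t : ℝ) : ℝ :=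
  if t = a then x a else Function.leftLim x t

/-- The completed graph of a càdlàg path `x` over `[a, b]`: the graph together with the
vertical segments joining `x(t-)` and `x(t)` at jump times. -/
def cGraph (a b : ℝ) (x : ℝ → ℝ) : Set (ℝ × ℝ) :=
  {p | p.2 ∈ Set.Icc a b ∧ p.1 ∈ segment ℝ (leftVal a x p.2) (x p.2)}

/-- The (M1) order on the completed graph: points are compared first by time, and within a
jump segment by distance to the left-limit value. -/
def graphLE (a : ℝ) (x : ℝ → ℝ) (p q : ℝ × ℝ) : Prop :=
  p.2 < q.2 ∨ (p.2 = q.2 ∧ |p.1 - leftVal a x p.2| ≤ |q.1 - leftVal a x q.2|)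

/-- `(u, r)` is a parametric representation of the completed graph of `x` over `[a, b]`:
a continuous non-decreasing (for the graph order) map from `[0,1]` onto the completed graph. -/
structure IsParamRep (a b : ℝ) (x : ℝ → ℝ) (u r : ℝ → ℝ) : Prop where
  cont_u : ContinuousOn u (Set.Icc 0 1)
  cont_r : ContinuousOn r (Set.Icc 0 1)
  mono : ∀ s s' : ℝ, s ∈ Set.Icc (0 : ℝ) 1 → s' ∈ Set.Icc (0 : ℝ) 1 → s ≤ s' →
    graphLE a x (u s, r s) (u s', r s')
  surj : (fun s => (u s, r s)) '' Set.Icc (0 : ℝ) 1 = cGraph a b x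

/-- The Skorokhod M1 distance between càdlàg paths restricted to `[a, b]`. -/
def m1DistOn (a b : ℝ) (x y : ℝ → ℝ) : ℝ :=
  sInf {c : ℝ | ∃ u₁ r₁ u₂ r₂ : ℝ → ℝ,
    IsParamRep a b x u₁ r₁ ∧ IsParamRep a b y u₂ r₂ ∧
    ∀ s ∈ Set.Icc (0 : ℝ) 1, |u₁ s - u₂ s| ≤ c ∧ |r₁ s - r₂ s| ≤ c}

/-- A metric `d_m` for the Skorokhod M1 topology on càdlàg paths on `[-1, ∞)`. -/
def m1Dist (x y : ℝ → ℝ) : ℝ :=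
  ∫ t in Set.Ioi (0 : ℝ), Real.exp (-t) * min (m1DistOn (-1) t x y) 1

/-- The crossing property: the path strictly crosses `0` right after its hitting time
(`inf_{0 ≤ s ≤ h} (x_{τ+s} − x_τ) < 0` for all `h > 0`, whenever `τ = hitTime x` is finite). -/
def CrossingProp (x : ℝ → ℝ) : Prop :=
  hitTime x ≠ ⊤ → ∀ h : ℝ, 0 < h →
    ∃ s ∈ Set.Icc (0 : ℝ) h, x ((hitTime x).toReal + s) - x ((hitTime x).toReal) < 0

/-- The functional `λ_t(x) = 1{τ(x) ≤ t}`. -/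
def lamT (t : ℝ) (x : ℝ → ℝ) : ℝ :=
  if hitTime x ≤ ENNReal.ofReal t then 1 else 0

/-!
Write a path of `ι(Ξ)` as `x = f - M` with `f` continuous and `M = G ∘ ℓ` non-decreasing and
right-continuous, so that all jumps of `x` are downward. Inverting the clock `s ↦ s + M s`
parametrises the completed graph of `x` over any `[a, b]`, so the infima defining the M1 distances
are taken over nonempty sets.

Fix `t ≥ 0` with `t ≠ τ(x)`. If `t < τ(x)`, then `x ≥ δ₀ > 0` on a neighbourhood of `[0, t]`, so a
path hitting `(-∞, 0]` before `t` stays M1-far from `x` on every `[-1, T]` with `T` large. If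
`τ(x) < t`, the crossing property gives `q ∈ (τ(x), t)` with `x_q < 0`, and a path M1-close to `x`
on `[-1, T]`, `T ≥ t`, must be negative near `q`. A bound `m1DistOn (-1) T ≥ δ` for all large `T`
bounds the integral `m1Dist` from below; the integrand is measurable because
`T ↦ m1DistOn (-1) T` is upper semicontinuous from the right, which is seen by concatenating
parametric representations. Hence `λ_t(xⁿ) = λ_t(x)` for large `n` whenever `t ≠ τ(x)`.
-/

open Topology
open Function (leftLim)

section CompletedGraph

variable {a b t : ℝ} {x : ℝ → ℝ}

lemma eq_of_mem_segment_of_abs_sub_le {p q z : ℝ} (hz : z ∈ segment ℝ p q)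
    (h : |q - p| ≤ |z - p|) : z = q := by
  rw [segment_eq_uIcc, mem_uIcc] at hz
  rcases hz with hz | hz <;> cases abs_cases (q - p) <;> cases abs_cases (z - p) <;> linarith

@[simp]
lemma leftVal_self : leftVal a x a = x a := if_pos rfl

lemma leftVal_of_ne {s : ℝ} (hs : s ≠ a) : leftVal a x s = leftLim x s := if_neg hs

lemma mk_mem_cGraph {s : ℝ} (hs : s ∈ Icc a b) : (x s, s) ∈ cGraph a b x :=
  ⟨hs, right_mem_segment ℝ _ _⟩

lemma eq_of_mem_cGraph_left {z s : ℝ} (hp : (z, s) ∈ cGraph a b x) (h : s = a) : z = x a := by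
  have h1 := hp.2
  dsimp only at h1
  rwa [h, leftVal_self, segment_same, mem_singleton_iff] at h1

namespace IsParamRep

variable {u r : ℝ → ℝ}

lemma mem_cGraph (h : IsParamRep a b x u r) {σ : ℝ} (hσ : σ ∈ Icc (0 : ℝ) 1) :
    (u σ, r σ) ∈ cGraph a b x :=
  h.surj ▸ mem_image_of_mem _ hσ

lemma exists_eq (h : IsParamRep a b x u r) {z s : ℝ} (hp : (z, s) ∈ cGraph a b x) :
    ∃ σ ∈ Icc (0 : ℝ) 1, u σ = z ∧ r σ = s := by
  rw [← h.surj] at hp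
  obtain ⟨σ, hσ, hσp⟩ := hp
  exact ⟨σ, hσ, congrArg Prod.fst hσp, congrArg Prod.snd hσp⟩

lemma apply_zero (h : IsParamRep a b x u r) (hab : a ≤ b) : u 0 = x a ∧ r 0 = a := by
  have h0 : (0 : ℝ) ∈ Icc (0 : ℝ) 1 := ⟨le_rfl, zero_le_one⟩
  obtain ⟨σ, hσ, -, hrσ⟩ := h.exists_eq (mk_mem_cGraph (x := x) ⟨le_rfl, hab⟩)
  have hr0 : r 0 = a := by
    rcases h.mono 0 σ h0 hσ hσ.1 with hlt | ⟨heq, -⟩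
    · exact absurd (h.mem_cGraph h0).1.1 (not_le.2 (hrσ ▸ hlt))
    · exact heq.trans hrσ
  exact ⟨eq_of_mem_cGraph_left (h.mem_cGraph h0) hr0, hr0⟩

lemma apply_one (h : IsParamRep a b x u r) (hab : a ≤ b) : u 1 = x b ∧ r 1 = b := by
  have h1 : (1 : ℝ) ∈ Icc (0 : ℝ) 1 := ⟨zero_le_one, le_rfl⟩
  obtain ⟨σ, hσ, huσ, hrσ⟩ := h.exists_eq (mk_mem_cGraph (x := x) ⟨hab, le_rfl⟩)
  rcases h.mono σ 1 hσ h1 hσ.2 with hlt | ⟨heq, habs⟩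
  · exact absurd (h.mem_cGraph h1).1.2 (not_le.2 (hrσ ▸ hlt))
  · dsimp only at heq habs
    rw [hrσ] at heq
    rw [huσ, hrσ, ← heq] at habs
    have hseg := (h.mem_cGraph h1).2
    dsimp only at hseg
    rw [← heq] at hseg
    exact ⟨eq_of_mem_segment_of_abs_sub_le hseg habs, heq.symm⟩

lemma apply_one_eq_apply_zero {u' r' : ℝ → ℝ} (h : IsParamRep a t x u r)
    (h' : IsParamRep t b x u' r') (hat : a ≤ t) (htb : t ≤ b) : u 1 = u' 0 ∧ r 1 = r' 0 :=
  ⟨(h.apply_one hat).1.trans (h'.apply_zero htb).1.symm,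
    (h.apply_one hat).2.trans (h'.apply_zero htb).2.symm⟩

end IsParamRep

end CompletedGraph

section Reparametrization

variable {a b t : ℝ} {x : ℝ → ℝ}

lemma isParamRep_comp_affine {α β : ℝ} (hαβ : α < β) {u r : ℝ → ℝ}
    (hu : ContinuousOn u (Icc α β)) (hr : ContinuousOn r (Icc α β))
    (hmono : ∀ v ∈ Icc α β, ∀ v' ∈ Icc α β, v ≤ v' → graphLE a x (u v, r v) (u v', r v'))
    (himage : (fun v => (u v, r v)) '' Icc α β = cGraph a b x) :
    IsParamRep a b x (fun σ => u ((β - α) * σ + α)) (fun σ => r ((β - α) * σ + α)) := by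
  have hpos : 0 < β - α := sub_pos.2 hαβ
  have himg : ((β - α) * · + α) '' Icc (0 : ℝ) 1 = Icc α β := by
    rw [image_affine_Icc' hpos]; ring_nf
  have hmaps : MapsTo ((β - α) * · + α) (Icc (0 : ℝ) 1) (Icc α β) :=
    himg ▸ mapsTo_image _ _
  have hφ : Continuous ((β - α) * · + α) := by fun_prop
  refine ⟨hu.comp hφ.continuousOn hmaps, hr.comp hφ.continuousOn hmaps,
    fun σ σ' hσ hσ' hle => hmono _ (hmaps hσ) _ (hmaps hσ') (by nlinarith), ?_⟩
  rw [← himage, ← himg, image_image]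

def concatParam (u u' : ℝ → ℝ) (v : ℝ) : ℝ := if v ≤ 1 then u v else u' (v - 1)

lemma concatParam_of_le {u u' : ℝ → ℝ} {v : ℝ} (hv : v ≤ 1) : concatParam u u' v = u v :=
  if_pos hv

lemma concatParam_of_one_le {u u' : ℝ → ℝ} {v : ℝ} (hv : 1 ≤ v) (h : u 1 = u' 0) :
    concatParam u u' v = u' (v - 1) := by
  rcases hv.eq_or_lt with rfl | hlt
  · simp [concatParam, h]
  · exact if_neg (not_le.2 hlt)

lemma continuousOn_concatParam {u u' : ℝ → ℝ} (hu : ContinuousOn u (Icc 0 1))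
    (hu' : ContinuousOn u' (Icc 0 1)) (h : u 1 = u' 0) :
    ContinuousOn (concatParam u u') (Icc 0 2) := by
  rw [← Icc_union_Icc_eq_Icc (by norm_num : (0 : ℝ) ≤ 1) (by norm_num : (1 : ℝ) ≤ 2)]
  refine ContinuousOn.union_of_isClosed ?_ ?_ isClosed_Icc isClosed_Icc
  · exact hu.congr fun v hv => concatParam_of_le hv.2
  · refine (hu'.comp (by fun_prop) fun v hv => ?_).congr fun v hv => concatParam_of_one_le hv.1 h
    exact ⟨by linarith [hv.1], by linarith [hv.2]⟩

lemma graphLE_of_graphLE_of_lt {p q : ℝ × ℝ} (hat : a < t) (hp : p ∈ cGraph t b x)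
    (hq : q ∈ cGraph t b x) (hle : graphLE t x p q) : graphLE a x p q := by
  obtain ⟨z, s⟩ := p
  obtain ⟨z', s'⟩ := q
  rcases hle with hlt | ⟨heq, habs⟩
  · exact Or.inl hlt
  dsimp only at heq habs hp ⊢
  refine Or.inr ⟨heq, ?_⟩
  rcases hp.1.1.eq_or_lt with hpt | hpt
  · subst heq
    rw [eq_of_mem_cGraph_left hp hpt.symm, eq_of_mem_cGraph_left hq hpt.symm]
  · have hpa : s ≠ a := (hat.trans hpt).ne'
    subst heq
    rwa [leftVal_of_ne hpt.ne', ← leftVal_of_ne hpa] at habs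

lemma graphLE_of_mem_cGraph {p q : ℝ × ℝ} (hp : p ∈ cGraph a t x) (hq : q ∈ cGraph t b x) :
    graphLE a x p q := by
  obtain ⟨z, s⟩ := p
  obtain ⟨z', s'⟩ := q
  have hs : s ≤ t := hp.1.2
  have hs' : t ≤ s' := hq.1.1
  rcases (hs.trans hs').lt_or_eq with hlt | heq
  · exact Or.inl hlt
  refine Or.inr ⟨heq, ?_⟩
  dsimp only at heq hp ⊢
  obtain rfl : s = t := le_antisymm hs (heq ▸ hs')
  subst heq
  rw [eq_of_mem_cGraph_left hq rfl]
  have hseg := hp.2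
  rw [segment_eq_uIcc] at hseg
  exact abs_sub_left_of_mem_uIcc hseg

lemma cGraph_eq_union (hat : a < t) (htb : t ≤ b) :
    cGraph a b x = cGraph a t x ∪ cGraph t b x := by
  ext ⟨z, s⟩
  simp only [cGraph, mem_ofPred_eq, mem_union, mem_Icc]
  rcases lt_trichotomy s t with hst | rfl | hst
  · have : ¬ t ≤ s := not_le.2 hst
    constructor
    · rintro ⟨⟨h1, -⟩, h2⟩; exact Or.inl ⟨⟨h1, hst.le⟩, h2⟩
    · rintro (⟨⟨h1, -⟩, h2⟩ | ⟨⟨h1, -⟩, -⟩)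
      · exact ⟨⟨h1, hst.le.trans htb⟩, h2⟩
      · exact absurd h1 this
  · rw [leftVal_self]
    constructor
    · rintro ⟨⟨h1, -⟩, h2⟩; exact Or.inl ⟨⟨h1, le_rfl⟩, h2⟩
    · rintro (⟨⟨h1, -⟩, h2⟩ | ⟨-, h2⟩)
      · exact ⟨⟨h1, htb⟩, h2⟩
      · rw [segment_same, mem_singleton_iff] at h2
        exact ⟨⟨hat.le, htb⟩, h2 ▸ right_mem_segment ℝ _ _⟩
  · rw [leftVal_of_ne hst.ne', leftVal_of_ne (hat.trans hst).ne']
    constructor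
    · rintro ⟨⟨-, h1⟩, h2⟩; exact Or.inr ⟨⟨hst.le, h1⟩, h2⟩
    · rintro (⟨⟨-, h1⟩, -⟩ | ⟨⟨-, h1⟩, h2⟩)
      · exact absurd h1 (not_le.2 hst)
      · exact ⟨⟨(hat.trans hst).le, h1⟩, h2⟩

lemma IsParamRep.concat {u r u' r' : ℝ → ℝ} (h : IsParamRep a t x u r)
    (h' : IsParamRep t b x u' r') (hat : a < t) (htb : t ≤ b) :
    IsParamRep a b x (fun σ => concatParam u u' (2 * σ)) (fun σ => concatParam r r' (2 * σ)) := by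
  obtain ⟨hu, hr⟩ := h.apply_one_eq_apply_zero h' hat.le htb
  have hleft : ∀ v ∈ Icc (0 : ℝ) 1,
      (concatParam u u' v, concatParam r r' v) ∈ cGraph a t x := fun v hv => by
    rw [concatParam_of_le hv.2, concatParam_of_le hv.2]; exact h.mem_cGraph hv
  have hright : ∀ v ∈ Icc (1 : ℝ) 2, (concatParam u u' v, concatParam r r' v) =
      (u' (v - 1), r' (v - 1)) := fun v hv => by
    rw [concatParam_of_one_le hv.1 hu, concatParam_of_one_le hv.1 hr]
  have hshift : MapsTo (· - 1) (Icc (1 : ℝ) 2) (Icc 0 1) :=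
    fun v hv => ⟨by linarith [hv.1], by linarith [hv.2]⟩
  have hmono : ∀ v ∈ Icc (0 : ℝ) 2, ∀ v' ∈ Icc (0 : ℝ) 2, v ≤ v' →
      graphLE a x (concatParam u u' v, concatParam r r' v)
        (concatParam u u' v', concatParam r r' v') := by
    intro v hv v' hv' hle
    rcases le_total v' 1 with hv'1 | hv'1
    · simp only [concatParam_of_le hv'1, concatParam_of_le (hle.trans hv'1)]
      exact h.mono v v' ⟨hv.1, hle.trans hv'1⟩ ⟨hv'.1, hv'1⟩ hle
    rw [hright v' ⟨hv'1, hv'.2⟩]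
    have hq := h'.mem_cGraph (hshift ⟨hv'1, hv'.2⟩)
    rcases le_total v 1 with hv1 | hv1
    · exact graphLE_of_mem_cGraph (hleft v ⟨hv.1, hv1⟩) hq
    · rw [hright v ⟨hv1, hv.2⟩]
      exact graphLE_of_graphLE_of_lt hat (h'.mem_cGraph (hshift ⟨hv1, hv.2⟩)) hq
        (h'.mono _ _ (hshift ⟨hv1, hv.2⟩) (hshift ⟨hv'1, hv'.2⟩) (by linarith))
  have himage : (fun v => (concatParam u u' v, concatParam r r' v)) '' Icc 0 2 =
      cGraph a b x := by
    rw [cGraph_eq_union hat htb, ← h.surj, ← h'.surj,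
      ← Icc_union_Icc_eq_Icc (by norm_num : (0 : ℝ) ≤ 1) (by norm_num : (1 : ℝ) ≤ 2),
      image_union, image_congr (fun v hv => by rw [concatParam_of_le hv.2, concatParam_of_le hv.2]),
      image_congr hright]
    congr 1
    rw [← image_image (fun v => (u' v, r' v)) (· - 1), image_sub_const_Icc]
    norm_num
  simpa using isParamRep_comp_affine (α := 0) (β := 2) two_pos
    (continuousOn_concatParam h.cont_u h'.cont_u hu)
    (continuousOn_concatParam h.cont_r h'.cont_r hr) hmono himage

end Reparametrization

section M1Distance

variable {a b t c c' ε : ℝ} {x y : ℝ → ℝ}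

def m1Set (a b : ℝ) (x y : ℝ → ℝ) : Set ℝ :=
  {c : ℝ | ∃ u₁ r₁ u₂ r₂ : ℝ → ℝ,
    IsParamRep a b x u₁ r₁ ∧ IsParamRep a b y u₂ r₂ ∧
    ∀ s ∈ Set.Icc (0 : ℝ) 1, |u₁ s - u₂ s| ≤ c ∧ |r₁ s - r₂ s| ≤ c}

lemma m1DistOn_eq_sInf : m1DistOn a b x y = sInf (m1Set a b x y) := rfl

lemma nonneg_of_mem_m1Set (hc : c ∈ m1Set a b x y) : 0 ≤ c := by
  obtain ⟨_, _, _, _, _, _, hbd⟩ := hc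
  exact (abs_nonneg _).trans (hbd 0 ⟨le_rfl, zero_le_one⟩).1

lemma m1DistOn_nonneg : 0 ≤ m1DistOn a b x y :=
  Real.sInf_nonneg fun _ => nonneg_of_mem_m1Set

lemma m1DistOn_le (hc : c ∈ m1Set a b x y) : m1DistOn a b x y ≤ c :=
  csInf_le ⟨0, fun _ => nonneg_of_mem_m1Set⟩ hc

lemma m1Set_comm : m1Set a b x y = m1Set a b y x := by
  ext c
  constructor <;> rintro ⟨u₁, r₁, u₂, r₂, h₁, h₂, hbd⟩ <;>
    exact ⟨u₂, r₂, u₁, r₁, h₂, h₁, fun s hs => by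
      rw [abs_sub_comm (u₂ s), abs_sub_comm (r₂ s)]; exact hbd s hs⟩

lemma m1DistOn_comm : m1DistOn a b x y = m1DistOn a b y x := by
  rw [m1DistOn_eq_sInf, m1DistOn_eq_sInf, m1Set_comm]

lemma abs_sub_le_of_mem_m1Set (hc : c ∈ m1Set a b x y) (hab : a ≤ b) : |x b - y b| ≤ c := by
  obtain ⟨u₁, r₁, u₂, r₂, h₁, h₂, hbd⟩ := hc
  rw [← (h₁.apply_one hab).1, ← (h₂.apply_one hab).1]
  exact (hbd 1 ⟨zero_le_one, le_rfl⟩).1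

lemma exists_mem_cGraph_of_mem_m1Set (hc : c ∈ m1Set a b x y) {s : ℝ} (hs : s ∈ Icc a b) :
    ∃ z r, (z, r) ∈ cGraph a b y ∧ |r - s| ≤ c ∧ |z - x s| ≤ c := by
  obtain ⟨u₁, r₁, u₂, r₂, h₁, h₂, hbd⟩ := hc
  obtain ⟨σ, hσ, hu, hr⟩ := h₁.exists_eq (mk_mem_cGraph (x := x) hs)
  refine ⟨u₂ σ, r₂ σ, h₂.mem_cGraph hσ, ?_, ?_⟩
  · rw [← hr, abs_sub_comm]; exact (hbd σ hσ).2
  · rw [← hu, abs_sub_comm]; exact (hbd σ hσ).1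

lemma max_mem_m1Set (hc : c ∈ m1Set a t x y) (hc' : c' ∈ m1Set t b x y) (hat : a < t)
    (htb : t ≤ b) : max c c' ∈ m1Set a b x y := by
  obtain ⟨u₁, r₁, u₂, r₂, h₁, h₂, hbd⟩ := hc
  obtain ⟨u₁', r₁', u₂', r₂', h₁', h₂', hbd'⟩ := hc'
  refine ⟨_, _, _, _, h₁.concat h₁' hat htb, h₂.concat h₂' hat htb, fun σ hσ => ?_⟩
  rcases le_total (2 * σ) 1 with h2σ | h2σ
  · simp only [concatParam_of_le h2σ]
    obtain ⟨hu, hr⟩ := hbd (2 * σ) ⟨by linarith [hσ.1], h2σ⟩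
    exact ⟨hu.trans (le_max_left _ _), hr.trans (le_max_left _ _)⟩
  · obtain ⟨hu₁, hr₁⟩ := h₁.apply_one_eq_apply_zero h₁' hat.le htb
    obtain ⟨hu₂, hr₂⟩ := h₂.apply_one_eq_apply_zero h₂' hat.le htb
    rw [concatParam_of_one_le h2σ hu₁, concatParam_of_one_le h2σ hu₂,
      concatParam_of_one_le h2σ hr₁, concatParam_of_one_le h2σ hr₂]
    obtain ⟨hu, hr⟩ := hbd' (2 * σ - 1) ⟨by linarith, by linarith [hσ.2]⟩
    exact ⟨hu.trans (le_max_right _ _), hr.trans (le_max_right _ _)⟩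

lemma mem_m1Set_of_forall_abs_sub_le {u₁ r₁ u₂ r₂ : ℝ → ℝ} (h₁ : IsParamRep t b x u₁ r₁)
    (h₂ : IsParamRep t b y u₂ r₂) (hε : 0 ≤ ε) (hx : ∀ p ∈ cGraph t b x, |p.1 - x t| ≤ ε)
    (hy : ∀ p ∈ cGraph t b y, |p.1 - y t| ≤ ε) :
    |x t - y t| + 2 * ε + (b - t) ∈ m1Set t b x y := by
  refine ⟨u₁, r₁, u₂, r₂, h₁, h₂, fun σ hσ => ?_⟩
  have hr₁ : r₁ σ ∈ Icc t b := (h₁.mem_cGraph hσ).1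
  have hr₂ : r₂ σ ∈ Icc t b := (h₂.mem_cGraph hσ).1
  have hu₁ : |u₁ σ - x t| ≤ ε := hx _ (h₁.mem_cGraph hσ)
  have hu₂ : |u₂ σ - y t| ≤ ε := hy _ (h₂.mem_cGraph hσ)
  have hxy := abs_nonneg (x t - y t)
  constructor
  · calc |u₁ σ - u₂ σ| ≤ |u₁ σ - x t| + (|x t - y t| + |y t - u₂ σ|) :=
          (abs_sub_le _ _ _).trans (by gcongr; exact abs_sub_le _ _ _)
      _ ≤ _ := by rw [abs_sub_comm (y t)]; linarith [hr₁.1.trans hr₁.2]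
  · rw [abs_le]
    constructor <;> linarith [hr₁.1, hr₁.2, hr₂.1, hr₂.2]

end M1Distance

section Clock

variable {M : ℝ → ℝ} {a b s v v' w : ℝ}

def clockInv (M : ℝ → ℝ) (a b v : ℝ) : ℝ := sInf {s ∈ Icc a b | v ≤ s + M s}

lemma bddBelow_clockInv_set : BddBelow {s ∈ Icc a b | v ≤ s + M s} := ⟨a, fun _ h => h.1.1⟩

lemma clockInv_le (hs : s ∈ Icc a b) (hv : v ≤ s + M s) : clockInv M a b v ≤ s :=
  csInf_le bddBelow_clockInv_set ⟨hs, hv⟩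

lemma clockInv_mem (hab : a ≤ b) (hv : v ≤ b + M b) : clockInv M a b v ∈ Icc a b :=
  ⟨le_csInf ⟨b, ⟨hab, le_rfl⟩, hv⟩ fun _ h => h.1.1, clockInv_le ⟨hab, le_rfl⟩ hv⟩

lemma add_lt_of_lt_clockInv (hs : s ∈ Icc a b) (h : s < clockInv M a b v) : s + M s < v :=
  not_le.1 fun hv => (clockInv_le hs hv).not_gt h

lemma le_add_clockInv (hMr : ∀ s, ContinuousWithinAt M (Ici s) s) (hab : a ≤ b)
    (hv : v ≤ b + M b) : v ≤ clockInv M a b v + M (clockInv M a b v) := by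
  set R := clockInv M a b v
  by_contra! hlt
  have hcont : ContinuousWithinAt (fun s => s + M s) (Ici R) R :=
    continuousWithinAt_id.add (hMr R)
  obtain ⟨u, hRu, hsub⟩ := mem_nhdsGE_iff_exists_Ico_subset.1
    (hcont.preimage_mem_nhdsWithin (Iio_mem_nhds hlt))
  obtain ⟨s, hs, hsu⟩ :=
    exists_lt_of_csInf_lt (s := {s ∈ Icc a b | v ≤ s + M s}) ⟨b, ⟨hab, le_rfl⟩, hv⟩ hRu
  have hRs : R ≤ s := csInf_le bddBelow_clockInv_set hs
  exact (hsub ⟨hRs, hsu⟩ : s + M s < v).not_ge hs.2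

lemma clockInv_mono (hab : a ≤ b) (hv' : v' ≤ b + M b) (h : v ≤ v') :
    clockInv M a b v ≤ clockInv M a b v' :=
  csInf_le_csInf bddBelow_clockInv_set ⟨b, ⟨hab, le_rfl⟩, hv'⟩ fun _ hs => ⟨hs.1, h.trans hs.2⟩

lemma clockInv_le_add (hM : Monotone M) (hMr : ∀ s, ContinuousWithinAt M (Ici s) s)
    (hab : a ≤ b) (hv' : v' ≤ b + M b) (h : v ≤ v') :
    clockInv M a b v' ≤ clockInv M a b v + (v' - v) := by
  have hR := clockInv_mem hab (h.trans hv')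
  rcases le_or_gt b (clockInv M a b v + (v' - v)) with hb | hb
  · exact (clockInv_mem hab hv').2.trans hb
  refine clockInv_le ⟨by linarith [hR.1], hb.le⟩ ?_
  have := hM (le_add_of_nonneg_right (sub_nonneg.2 h) : clockInv M a b v ≤ _)
  linarith [le_add_clockInv hMr hab (h.trans hv')]

lemma lipschitzOnWith_clockInv (hM : Monotone M) (hMr : ∀ s, ContinuousWithinAt M (Ici s) s)
    (hab : a ≤ b) : LipschitzOnWith 1 (clockInv M a b) (Iic (b + M b)) := by
  refine LipschitzOnWith.of_dist_le_mul fun v hv v' hv' => ?_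
  rw [NNReal.coe_one, one_mul, Real.dist_eq, Real.dist_eq]
  rcases le_total v v' with h | h
  · rw [abs_sub_comm, abs_of_nonneg (sub_nonneg.2 (clockInv_mono hab hv' h)),
      abs_sub_comm, abs_of_nonneg (sub_nonneg.2 h)]
    linarith [clockInv_le_add hM hMr hab hv' h]
  · rw [abs_of_nonneg (sub_nonneg.2 (clockInv_mono hab hv h)), abs_of_nonneg (sub_nonneg.2 h)]
    linarith [clockInv_le_add hM hMr hab hv h]

lemma leftVal_le (hM : Monotone M) : leftVal a M s ≤ M s := by
  rcases eq_or_ne s a with rfl | hs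
  · rw [leftVal_self]
  · rw [leftVal_of_ne hs]; exact hM.leftLim_le le_rfl

lemma leftVal_clockInv_le (hM : Monotone M) (hab : a ≤ b) (hv : v ∈ Icc (a + M a) (b + M b)) :
    leftVal a M (clockInv M a b v) ≤ v - clockInv M a b v := by
  set R := clockInv M a b v
  have hR : R ∈ Icc a b := clockInv_mem hab hv.2
  rcases hR.1.eq_or_lt with hRa | hRa
  · rw [← hRa, leftVal_self]; linarith [hv.1]
  rw [leftVal_of_ne hRa.ne']
  refine le_of_tendsto_of_tendsto (hM.tendsto_leftLim R)
    ((continuous_const.sub continuous_id).tendsto R |>.mono_left nhdsWithin_le_nhds) ?_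
  filter_upwards [Ioo_mem_nhdsLT hRa] with s hs
  show M s ≤ v - s
  linarith [add_lt_of_lt_clockInv ⟨hs.1.le, hs.2.le.trans hR.2⟩ hs.2]

lemma clockInv_add_eq (hM : Monotone M) (hs : s ∈ Icc a b) (hw : leftVal a M s ≤ w)
    (hw' : w ≤ M s) : clockInv M a b (s + w) = s := by
  refine le_antisymm (clockInv_le hs (by linarith)) (le_csInf ⟨s, hs, by linarith⟩ ?_)
  rintro s' ⟨hs', hle⟩
  by_contra! hlt
  rw [leftVal_of_ne (hs'.1.trans_lt hlt).ne'] at hw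
  linarith [hM.le_leftLim hlt]

end Clock

section Measurability

lemma measurableSet_of_mem_nhdsGE {U : Set ℝ} (hU : ∀ t ∈ U, U ∈ 𝓝[≥] t) : MeasurableSet U := by
  choose! u hu hsub using fun t ht => mem_nhdsGE_iff_exists_Ico_subset.1 (hU t ht)
  -- The intervals `(t, u t)` lie in `interior U`, so they are disjoint for `t ∈ U \ interior U`.
  have hcount : (U \ interior U).Countable := by
    refine PairwiseDisjoint.countable_of_Ioo (y := u) ?_ fun t ht => hu t ht.1
    intro t ht t' ht' hne
    wlog hlt : t < t' generalizing t t'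
    · exact (this ht' ht hne.symm (hne.symm.lt_of_le (not_lt.1 hlt))).symm
    have hle : u t ≤ t' := not_lt.1 fun h => ht'.2 <|
      isOpen_Ioo.subset_interior_iff.2 (Ioo_subset_Ico_self.trans (hsub t ht.1)) ⟨hlt, h⟩
    exact disjoint_left.2 fun s hs hs' => (hs.2.trans_le hle).not_gt hs'.1
  rw [← union_sdiff_cancel (interior_subset (s := U))]
  exact isOpen_interior.measurableSet.union hcount.measurableSet

lemma aemeasurable_restrict_Ioi_of_upperSemicontinuousWithinAt {g : ℝ → ℝ} {a : ℝ}
    (hg : ∀ T > a, UpperSemicontinuousWithinAt g (Ici T) T) :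
    AEMeasurable g (volume.restrict (Ioi a)) := by
  refine aemeasurable_restrict_of_measurable_subtype measurableSet_Ioi
    (measurable_of_Iio fun A => ?_)
  have hU : MeasurableSet (Ioi a ∩ g ⁻¹' Iio A) := measurableSet_of_mem_nhdsGE fun T hT =>
    inter_mem (mem_nhdsWithin_of_mem_nhds (Ioi_mem_nhds hT.1)) (hg T hT.1 A hT.2)
  have hpre : (fun T : Ioi a => g T) ⁻¹' Iio A = Subtype.val ⁻¹' (Ioi a ∩ g ⁻¹' Iio A) := by
    ext T
    simp
  rw [hpre]
  exact measurable_subtype_coe hU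

end Measurability

section HitTime

variable {x : ℝ → ℝ} {s t : ℝ}

lemma hitTime_le_ofReal (hs : 0 ≤ s) (hxs : x s ≤ 0) : hitTime x ≤ ENNReal.ofReal s :=
  iInf₂_le s ⟨hs, hxs⟩

lemma pos_of_ofReal_lt_hitTime (hs : 0 ≤ s) (h : ENNReal.ofReal s < hitTime x) : 0 < x s :=
  not_le.1 fun hxs => (hitTime_le_ofReal hs hxs).not_gt h

lemma exists_nonpos_of_hitTime_lt (h : hitTime x < ENNReal.ofReal t) :
    ∃ s, 0 ≤ s ∧ s < t ∧ x s ≤ 0 := by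
  simp only [hitTime, iInf_lt_iff] at h
  obtain ⟨s, ⟨hs, hxs⟩, hst⟩ := h
  exact ⟨s, hs, (ENNReal.ofReal_lt_ofReal_iff_of_nonneg hs).1 hst, hxs⟩

lemma apply_toReal_hitTime_nonpos (hfin : hitTime x ≠ ⊤)
    (hrc : ContinuousWithinAt x (Ici (hitTime x).toReal) (hitTime x).toReal) :
    x (hitTime x).toReal ≤ 0 := by
  set τ := (hitTime x).toReal
  have hτ : hitTime x = ENNReal.ofReal τ := (ENNReal.ofReal_toReal hfin).symm
  by_contra! hpos
  obtain ⟨u, hτu, hsub⟩ := mem_nhdsGE_iff_exists_Ico_subset.1 (hrc (Ioi_mem_nhds hpos))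
  obtain ⟨s, hs, hsu, hxs⟩ := exists_nonpos_of_hitTime_lt (x := x) (t := u)
    (hτ ▸ ENNReal.ofReal_lt_ofReal_iff'.2 ⟨hτu, ENNReal.toReal_nonneg.trans_lt hτu⟩)
  rcases lt_or_ge s τ with hsτ | hτs
  · exact (hitTime_le_ofReal hs hxs).not_gt
      (hτ ▸ ENNReal.ofReal_lt_ofReal_iff'.2 ⟨hsτ, hs.trans_lt hsτ⟩)
  · exact (hsub ⟨hτs, hsu⟩ : 0 < x s).not_ge hxs

end HitTime

lemma Monotone.upperSemicontinuous_of_continuousWithinAt_Ici {M : ℝ → ℝ} (hM : Monotone M)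
    (hMr : ∀ s, ContinuousWithinAt M (Ici s) s) : UpperSemicontinuous M := by
  intro t y hy
  rw [← nhdsLT_sup_nhdsGE, eventually_sup]
  exact ⟨eventually_nhdsWithin_of_forall fun s hs => (hM (le_of_lt hs)).trans_lt hy,
    hMr t (Iio_mem_nhds hy)⟩

/-- Paths `x = f - M` on `[-1, ∞)`: for `x = ι(f, ℓ)` take `M = G ∘ ℓ`. -/
structure IsContSubMono (x f M : ℝ → ℝ) : Prop where
  continuousOn : ContinuousOn f (Ici (-1))
  monotone : Monotone M
  rightCont : ∀ s, ContinuousWithinAt M (Ici s) s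
  eq_sub : ∀ s, -1 ≤ s → x s = f s - M s

namespace IsContSubMono

variable {x f M y g N : ℝ → ℝ} {a b t ε : ℝ}

lemma continuousWithinAt_Ici (hx : IsContSubMono x f M) (ht : -1 ≤ t) :
    ContinuousWithinAt x (Ici t) t :=
  (((hx.continuousOn t ht).mono (Ici_subset_Ici.2 ht)).sub (hx.rightCont t)).congr
    (fun s hs => hx.eq_sub s (ht.trans hs)) (hx.eq_sub t ht)

lemma tendsto_nhdsLT (hx : IsContSubMono x f M) (ht : -1 < t) :
    Tendsto x (𝓝[<] t) (𝓝 (f t - leftLim M t)) := by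
  have hf : Tendsto f (𝓝[<] t) (𝓝 (f t)) := by
    rw [← nhdsWithin_Ioo_eq_nhdsLT ht]
    exact ((hx.continuousOn t ht.le).mono fun s hs => le_of_lt hs.1).tendsto
  refine (hf.sub (hx.monotone.tendsto_leftLim t)).congr' ?_
  filter_upwards [Ioo_mem_nhdsLT ht] with s hs
  exact (hx.eq_sub s hs.1.le).symm

lemma leftVal_eq (hx : IsContSubMono x f M) (ha : -1 ≤ a) (hat : a ≤ t) :
    leftVal a x t = f t - leftVal a M t := by
  rcases hat.eq_or_lt with rfl | hat
  · rw [leftVal_self, leftVal_self, hx.eq_sub a ha]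
  · rw [leftVal_of_ne hat.ne', leftVal_of_ne hat.ne']
    exact leftLim_eq_of_tendsto (hx.tendsto_nhdsLT (ha.trans_lt hat))

lemma mem_cGraph_iff (hx : IsContSubMono x f M) (ha : -1 ≤ a) {z s : ℝ} :
    (z, s) ∈ cGraph a b x ↔ s ∈ Icc a b ∧ leftVal a M s ≤ f s - z ∧ f s - z ≤ M s := by
  refine and_congr_right fun hs => ?_
  dsimp only
  rw [hx.leftVal_eq ha hs.1, hx.eq_sub s (ha.trans hs.1), segment_eq_uIcc,
    uIcc_of_ge (by linarith [leftVal_le (a := a) (s := s) hx.monotone]), mem_Icc]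
  constructor <;> rintro ⟨h1, h2⟩ <;> constructor <;> linarith

lemma le_of_mem_cGraph (hx : IsContSubMono x f M) (ha : -1 ≤ a) {z s : ℝ}
    (hp : (z, s) ∈ cGraph a b x) : x s ≤ z := by
  rw [hx.mem_cGraph_iff ha] at hp
  rw [hx.eq_sub s (ha.trans hp.1.1)]
  linarith [hp.2.2]

lemma exists_isParamRep (hx : IsContSubMono x f M) (ha : -1 ≤ a) (hab : a < b) :
    ∃ u r, IsParamRep a b x u r := by
  -- As `v` runs through `[a + M a, b + M b]`, `R v` runs through `[a, b]`, pausing at each jump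
  -- of `M` while `f (R v) - (v - R v)` runs down the vertical segment of the completed graph.
  have hM := hx.monotone
  set R := clockInv M a b
  have hαβ : a + M a < b + M b := by linarith [hM hab.le]
  have hR : ∀ v ∈ Icc (a + M a) (b + M b), R v ∈ Icc a b :=
    fun v hv => clockInv_mem hab.le hv.2
  have hRcont : ContinuousOn R (Icc (a + M a) (b + M b)) :=
    (lipschitzOnWith_clockInv hM hx.rightCont hab.le).continuousOn.mono fun v hv => hv.2
  have hUcont : ContinuousOn (fun v => f (R v) - (v - R v)) (Icc (a + M a) (b + M b)) :=
    (hx.continuousOn.comp hRcont fun v hv => ha.trans (hR v hv).1).sub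
      (continuousOn_id.sub hRcont)
  refine ⟨_, _, isParamRep_comp_affine hαβ hUcont hRcont ?_ ?_⟩
  · intro v hv v' hv' hle
    have hRle : R v ≤ R v' := clockInv_mono hab.le hv'.2 hle
    rcases hRle.lt_or_eq with hlt | heq
    · exact Or.inl hlt
    refine Or.inr ⟨heq, ?_⟩
    have e : ∀ w, f (R w) - (w - R w) - (f (R w) - leftVal a M (R w)) =
        leftVal a M (R w) - (w - R w) := fun w => by ring
    have h1 : leftVal a M (R v) ≤ v - R v := leftVal_clockInv_le hM hab.le hv
    dsimp only
    rw [hx.leftVal_eq ha (hR v hv).1, hx.leftVal_eq ha (hR v' hv').1, e, e, ← heq,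
      abs_of_nonpos (by linarith), abs_of_nonpos (by linarith)]
    linarith
  · ext ⟨z, s⟩
    rw [hx.mem_cGraph_iff ha]
    constructor
    · rintro ⟨v, hv, hvp⟩
      simp only [Prod.mk.injEq] at hvp
      obtain ⟨rfl, rfl⟩ := hvp
      refine ⟨hR v hv, ?_, ?_⟩ <;> ring_nf
      · linarith [leftVal_clockInv_le hM hab.le hv]
      · linarith [le_add_clockInv hx.rightCont hab.le hv.2]
    · rintro ⟨hs, hw, hw'⟩
      have hMa : M a ≤ leftVal a M s := by
        rcases hs.1.eq_or_lt with rfl | has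
        · rw [leftVal_self]
        · rw [leftVal_of_ne has.ne']; exact hM.le_leftLim has
      have hRs : R (s + (f s - z)) = s := clockInv_add_eq hM hs hw hw'
      refine ⟨s + (f s - z), ⟨by linarith [hs.1], by linarith [hs.2, hM hs.2]⟩, ?_⟩
      simp only [hRs]
      ring_nf


lemma m1Set_nonempty (hx : IsContSubMono x f M) (hy : IsContSubMono y g N) (hb : -1 < b) :
    (m1Set (-1) b x y).Nonempty := by
  obtain ⟨u₁, r₁, h₁⟩ := hx.exists_isParamRep le_rfl hb
  obtain ⟨u₂, r₂, h₂⟩ := hy.exists_isParamRep le_rfl hb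
  obtain ⟨C₁, hC₁⟩ := isCompact_Icc.exists_bound_of_continuousOn (h₁.cont_u.sub h₂.cont_u)
  obtain ⟨C₂, hC₂⟩ := isCompact_Icc.exists_bound_of_continuousOn (h₁.cont_r.sub h₂.cont_r)
  exact ⟨max C₁ C₂, u₁, r₁, u₂, r₂, h₁, h₂, fun σ hσ =>
    ⟨(hC₁ σ hσ).trans (le_max_left _ _), (hC₂ σ hσ).trans (le_max_right _ _)⟩⟩

lemma exists_forall_abs_sub_le (hx : IsContSubMono x f M) (ht : -1 ≤ t) (hε : 0 < ε) :
    ∃ δ > 0, ∀ T ≤ t + δ, ∀ p ∈ cGraph t T x, |p.1 - x t| ≤ ε := by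
  obtain ⟨δ, hδ, hball⟩ := Metric.continuousWithinAt_iff.1 (hx.continuousWithinAt_Ici ht) ε hε
  refine ⟨δ / 2, half_pos hδ, fun T hT p hp => ?_⟩
  have hnear : ∀ s ∈ Icc t T, dist (x s) (x t) ≤ ε := fun s hs =>
    (hball hs.1 (by rw [Real.dist_eq, abs_of_nonneg (by linarith [hs.1])]; linarith [hs.2])).le
  have hleft : dist (leftVal t x p.2) (x t) ≤ ε := by
    rcases hp.1.1.eq_or_lt with h | h
    · rw [← h, leftVal_self, dist_self]; exact hε.le
    have hlim := hx.tendsto_nhdsLT (ht.trans_lt h)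
    rw [leftVal_of_ne h.ne', leftLim_eq_of_tendsto hlim]
    refine le_of_tendsto (hlim.dist tendsto_const_nhds) ?_
    filter_upwards [Ioo_mem_nhdsLT h] with s hs using hnear s ⟨hs.1.le, hs.2.le.trans hp.1.2⟩
  rw [← Real.dist_eq, ← Metric.mem_closedBall]
  exact (convex_closedBall (x t) ε).segment_subset hleft (hnear _ hp.1) hp.2

lemma m1DistOn_upperSemicontinuousWithinAt (hx : IsContSubMono x f M)
    (hy : IsContSubMono y g N) (ht : -1 < t) :
    UpperSemicontinuousWithinAt (fun T => m1DistOn (-1) T x y) (Ici t) t := by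
  -- An almost optimal pair of representations over `[-1, t]`, followed by any pair over `[t, T]`,
  -- which costs little by right-continuity at `t`.
  intro A hA
  obtain ⟨c, hc, hcA⟩ := exists_lt_of_csInf_lt (hx.m1Set_nonempty hy ht) hA
  have hε : 0 < (A - c) / 4 := by linarith
  obtain ⟨δx, hδx, hoscx⟩ := hx.exists_forall_abs_sub_le ht.le hε
  obtain ⟨δy, hδy, hoscy⟩ := hy.exists_forall_abs_sub_le ht.le hε
  refine mem_nhdsGE_iff_exists_Ico_subset.2
    ⟨t + min (min δx δy) ((A - c) / 4), by simp [hδx, hδy, hε], fun T hT => ?_⟩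
  rcases hT.1.eq_or_lt with rfl | htT
  · exact hA
  have hTt : T - t < min (min δx δy) ((A - c) / 4) := by linarith [hT.2]
  simp only [lt_min_iff] at hTt
  obtain ⟨u₁, r₁, h₁⟩ := hx.exists_isParamRep ht.le htT
  obtain ⟨u₂, r₂, h₂⟩ := hy.exists_isParamRep ht.le htT
  have hc' := mem_m1Set_of_forall_abs_sub_le h₁ h₂ hε.le (hoscx T (by linarith))
    (hoscy T (by linarith))
  have hxy := abs_sub_le_of_mem_m1Set hc ht.le
  show m1DistOn (-1) T x y < A
  refine (m1DistOn_le (max_mem_m1Set hc hc' ht htT.le)).trans_lt (max_lt hcA ?_)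
  linarith

lemma exists_lt_add_of_m1DistOn_lt (hx : IsContSubMono x f M) (hy : IsContSubMono y g N)
    (hb : -1 < b) {δ s : ℝ} (h : m1DistOn (-1) b x y < δ) (hs : s ∈ Icc (-1) b) :
    ∃ r ∈ Icc (-1) b, |r - s| < δ ∧ y r < x s + δ := by
  obtain ⟨c, hc, hcδ⟩ := exists_lt_of_csInf_lt (hx.m1Set_nonempty hy hb) h
  obtain ⟨z, r, hp, hr, hz⟩ := exists_mem_cGraph_of_mem_m1Set hc hs
  exact ⟨r, hp.1, hr.trans_lt hcδ,
    (hy.le_of_mem_cGraph le_rfl hp).trans_lt (by linarith [(abs_le.1 hz).2])⟩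

lemma lowerSemicontinuousOn (hx : IsContSubMono x f M) : LowerSemicontinuousOn x (Ici (-1)) :=
  fun t ht => ((hx.continuousOn t ht).lowerSemicontinuousWithinAt.add
    ((hx.monotone.upperSemicontinuous_of_continuousWithinAt_Ici hx.rightCont).neg
      |>.lowerSemicontinuousWithinAt _ t)).congr_of_eventuallyEq ht
    (eventually_nhdsWithin_of_forall fun s hs => by
      simp [hx.eq_sub s hs, sub_eq_add_neg])

lemma exists_pos_le (hx : IsContSubMono x f M) {c d : ℝ} (hc : -1 ≤ c) (hcd : c ≤ d)
    (hpos : ∀ s ∈ Icc c d, 0 < x s) : ∃ δ > 0, ∀ s ∈ Icc c d, δ ≤ x s := by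
  obtain ⟨m, hm, hmin⟩ := (hx.lowerSemicontinuousOn.mono fun s hs => hc.trans hs.1).exists_isMinOn
    (nonempty_Icc.2 hcd) isCompact_Icc
  exact ⟨x m, hpos m hm, fun s hs => hmin hs⟩


lemma exists_m1DistOn_lt_of_m1Dist_lt (hx : IsContSubMono x f M) (hy : IsContSubMono y g N)
    {δ T₀ : ℝ} (hT₀ : 0 < T₀) (h : m1Dist x y < min δ 1 * Real.exp (-T₀)) :
    ∃ T ≥ T₀, m1DistOn (-1) T x y < δ := by
  by_contra! hD
  have hexp : IntegrableOn (fun T : ℝ => Real.exp (-T)) (Ioi 0) := by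
    simpa using exp_neg_integrableOn_Ioi 0 one_pos
  have hint : IntegrableOn (fun T => Real.exp (-T) * min (m1DistOn (-1) T x y) 1) (Ioi 0) := by
    have hmeas := aemeasurable_restrict_Ioi_of_upperSemicontinuousWithinAt fun T (hT : 0 < T) =>
      hx.m1DistOn_upperSemicontinuousWithinAt hy (by linarith : (-1 : ℝ) < T)
    refine hexp.mono' ((Real.continuous_exp.comp continuous_neg).aemeasurable.mul
      (hmeas.min aemeasurable_const)).aestronglyMeasurable (Eventually.of_forall fun T => ?_)
    rw [Real.norm_eq_abs, abs_of_nonneg (mul_nonneg (Real.exp_nonneg _)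
      (le_min m1DistOn_nonneg zero_le_one))]
    exact mul_le_of_le_one_right (Real.exp_nonneg _) (min_le_right _ _)
  refine h.not_ge ?_
  calc min δ 1 * Real.exp (-T₀)
      = ∫ T in Ioi 0, (Ici T₀).indicator (fun T => min δ 1 * Real.exp (-T)) T := by
        rw [setIntegral_indicator measurableSet_Ici,
          inter_eq_self_of_subset_right (Ici_subset_Ioi.2 hT₀), integral_Ici_eq_integral_Ioi,
          integral_const_mul, integral_exp_neg_Ioi]
    _ ≤ m1Dist x y := by
      refine setIntegral_mono_on ((hexp.const_mul _).indicator measurableSet_Ici) hint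
        measurableSet_Ioi fun T _ => ?_
      by_cases hT : T ∈ Ici T₀
      · rw [indicator_of_mem hT, mul_comm]
        gcongr
        exact hD T hT
      · rw [indicator_of_notMem hT]
        exact mul_nonneg (Real.exp_nonneg _) (le_min m1DistOn_nonneg zero_le_one)

lemma exists_pos_Icc_of_pos (hx : IsContSubMono x f M) (ht : -1 < t) (hpos : 0 < x t) :
    ∃ η > 0, ∀ s ∈ Icc (t - η) t, 0 < x s := by
  have hf : ContinuousAt (fun s => f s - M t) t :=
    ((hx.continuousOn t ht.le).continuousAt (Ici_mem_nhds ht)).sub continuousAt_const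
  have hft : 0 < f t - M t := hx.eq_sub t ht.le ▸ hpos
  obtain ⟨η, hη, hball⟩ := Metric.eventually_nhds_iff.1
    ((hf.eventually (lt_mem_nhds hft)).and (Ioi_mem_nhds ht))
  refine ⟨η / 2, half_pos hη, fun s hs => ?_⟩
  have hs' := hball (show dist s t < η by
    rw [Real.dist_eq, abs_of_nonpos (by linarith [hs.2])]; linarith [hs.1])
  rw [hx.eq_sub s (le_of_lt hs'.2)]
  linarith [hs'.1, hx.monotone hs.2]

lemma exists_lt_hitTime_of_m1DistOn_lt (hx : IsContSubMono x f M) (ht : 0 ≤ t)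
    (hτ : ENNReal.ofReal t < hitTime x) :
    ∃ δ > 0, ∃ T₀ > 0, ∀ y g N, IsContSubMono y g N → ∀ T ≥ T₀,
      m1DistOn (-1) T y x < δ → ENNReal.ofReal t < hitTime y := by
  obtain ⟨t', -, htt', ht'τ⟩ := ENNReal.lt_iff_exists_real_btwn.1 hτ
  obtain ⟨htt', ht'⟩ := ENNReal.ofReal_lt_ofReal_iff'.1 htt'
  have hpos : ∀ s ∈ Icc 0 t', 0 < x s := fun s hs =>
    pos_of_ofReal_lt_hitTime hs.1 ((ENNReal.ofReal_le_ofReal hs.2).trans_lt ht'τ)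
  obtain ⟨η, hη, hposη⟩ := hx.exists_pos_Icc_of_pos (by norm_num) (hpos 0 ⟨le_rfl, ht'.le⟩)
  set η' := min η 1
  obtain ⟨δ₀, hδ₀, hxδ₀⟩ := hx.exists_pos_le (c := -η') (d := t')
    (by linarith [min_le_right η 1]) (by linarith [lt_min hη one_pos]) fun s hs => by
      rcases le_total s 0 with hs0 | hs0
      · exact hposη s ⟨by linarith [hs.1, min_le_left η 1], hs0⟩
      · exact hpos s ⟨hs0, hs.2⟩
  set δ := min δ₀ (min η' ((t' - t) / 2))
  have hδ : 0 < δ := lt_min hδ₀ (lt_min (lt_min hη one_pos) (by linarith))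
  have hδδ₀ : δ ≤ δ₀ := min_le_left _ _
  have hδη : δ ≤ η' := (min_le_right _ _).trans (min_le_left _ _)
  have hδt : δ ≤ (t' - t) / 2 := (min_le_right _ _).trans (min_le_right _ _)
  refine ⟨δ, hδ, t', ht', fun y g N hy T hT hD => not_le.1 fun hhit => ?_⟩
  -- `y` hits `(-∞, 0]` at some `s`, but `x ≥ δ₀ ≥ δ` on the `δ`-neighbourhood of `s`.
  obtain ⟨s, hs0, hst, hys⟩ := exists_nonpos_of_hitTime_lt (hhit.trans_lt
    (ENNReal.ofReal_lt_ofReal_iff'.2 ⟨lt_add_of_pos_right t hδ, by linarith⟩))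
  obtain ⟨r, -, hrs, hxr⟩ := hy.exists_lt_add_of_m1DistOn_lt hx (b := T) (s := s) (by linarith) hD
    ⟨by linarith, by linarith⟩
  rw [abs_lt] at hrs
  linarith [hxδ₀ r ⟨by linarith, by linarith⟩]

lemma exists_hitTime_le_of_m1DistOn_lt (hx : IsContSubMono x f M) (hcross : CrossingProp x)
    (hτ : hitTime x < ENNReal.ofReal t) :
    ∃ δ > 0, ∀ y g N, IsContSubMono y g N → ∀ T ≥ t,
      m1DistOn (-1) T y x < δ → hitTime y ≤ ENNReal.ofReal t := by
  have hfin : hitTime x ≠ ⊤ := hτ.ne_top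
  set τ := (hitTime x).toReal
  have hτ0 : 0 ≤ τ := ENNReal.toReal_nonneg
  have hτt : τ < t := by
    rw [← ENNReal.ofReal_toReal hfin] at hτ
    exact (ENNReal.ofReal_lt_ofReal_iff'.1 hτ).1
  obtain ⟨q, hq, hxq⟩ := hcross hfin ((t - τ) / 2) (by linarith)
  have hxτ : x τ ≤ 0 := apply_toReal_hitTime_nonpos hfin (hx.continuousWithinAt_Ici (by linarith))
  change x (τ + q) - x τ < 0 at hxq
  have hq0 : 0 < q := hq.1.lt_of_ne fun h => by simp [← h] at hxq
  set δ := min (-x (τ + q)) (min q ((t - τ) / 2))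
  have hδ : 0 < δ := lt_min (by linarith) (lt_min hq0 (by linarith))
  have hδx : δ ≤ -x (τ + q) := min_le_left _ _
  have hδq : δ ≤ q := (min_le_right _ _).trans (min_le_left _ _)
  have hδt : δ ≤ (t - τ) / 2 := (min_le_right _ _).trans (min_le_right _ _)
  refine ⟨δ, hδ, fun y g N hy T hT hD => ?_⟩
  rw [m1DistOn_comm] at hD
  obtain ⟨r, -, hrq, hyr⟩ :=
    hx.exists_lt_add_of_m1DistOn_lt hy (b := T) (s := τ + q) (by linarith) hD
    ⟨by linarith, by linarith [hq.2]⟩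
  rw [abs_lt] at hrq
  exact (hitTime_le_ofReal (s := r) (by linarith) (by linarith)).trans
    (ENNReal.ofReal_le_ofReal (by linarith [hq.2]))

lemma exists_lamT_eq (hx : IsContSubMono x f M) (hcross : CrossingProp x) (ht : 0 ≤ t)
    (htτ : t ≠ (hitTime x).toReal) :
    ∃ ε > 0, ∀ y g N, IsContSubMono y g N → m1Dist y x < ε → lamT t y = lamT t x := by
  by_cases hle : hitTime x ≤ ENNReal.ofReal t
  · have hlt : hitTime x < ENNReal.ofReal t :=
      hle.lt_of_ne fun h => htτ (by rw [h, ENNReal.toReal_ofReal ht])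
    obtain ⟨δ, hδ, hB⟩ := hx.exists_hitTime_le_of_m1DistOn_lt hcross hlt
    have ht0 : 0 < t := ENNReal.ofReal_pos.1 (pos_of_gt hlt)
    refine ⟨min δ 1 * Real.exp (-t), by positivity, fun y g N hy hd => ?_⟩
    obtain ⟨T, hT, hD⟩ := hy.exists_m1DistOn_lt_of_m1Dist_lt hx ht0 hd
    simp [lamT, hle, hB y g N hy T hT hD]
  · obtain ⟨δ, hδ, T₀, hT₀, hA⟩ := hx.exists_lt_hitTime_of_m1DistOn_lt ht (not_le.1 hle)
    refine ⟨min δ 1 * Real.exp (-T₀), by positivity, fun y g N hy hd => ?_⟩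
    obtain ⟨T, hT, hD⟩ := hy.exists_m1DistOn_lt_of_m1Dist_lt hx hT₀ hd
    simp [lamT, hle, not_le.2 (hA y g N hy T hT hD)]

end IsContSubMono

lemma MemM.mem_Icc {ℓ : ℝ → ℝ} (hℓ : MemM ℓ) {t : ℝ} (ht : -1 ≤ t) : ℓ t ∈ Icc 0 1 :=
  ⟨hℓ.zero_on_neg (-1) le_rfl (by norm_num) ▸ hℓ.mono (mem_Ici.2 le_rfl) ht ht, hℓ.le_one t ht⟩

lemma exists_isContSubMono {G : ℝ → ℝ} (hGcont : ContinuousOn G (Icc (-1) 1))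
    (hGmono : MonotoneOn G (Icc (-1) 1)) {x : ℝ → ℝ}
    (hx : ∃ f ℓ : ℝ → ℝ, ContinuousOn f (Ici (-1)) ∧ MemM ℓ ∧ x = fun t => f t - G (ℓ t)) :
    ∃ f M, IsContSubMono x f M := by
  obtain ⟨f, ℓ, hf, hℓ, rfl⟩ := hx
  have hmem : ∀ t, -1 ≤ t → ℓ t ∈ Icc (-1) 1 := fun t ht =>
    ⟨by linarith [(hℓ.mem_Icc ht).1], (hℓ.mem_Icc ht).2⟩
  refine ⟨f, fun s => G (ℓ (max s (-1))), hf, fun s s' hss' => ?_, fun s => ?_, fun s hs => ?_⟩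
  · exact hGmono (hmem _ (le_max_right _ _)) (hmem _ (le_max_right _ _))
      (hℓ.mono (mem_Ici.2 (le_max_right _ _)) (mem_Ici.2 (le_max_right _ _))
        (max_le_max hss' le_rfl))
  · have hGℓ : ContinuousWithinAt (fun u => G (ℓ u)) (Ici (max s (-1))) (max s (-1)) :=
      (hGcont _ (hmem _ (le_max_right _ _))).comp (hℓ.right_cont _ (le_max_right _ _))
        fun u hu => hmem u ((le_max_right s (-1)).trans hu)
    have hmax : Continuous fun u : ℝ => max u (-1) := by fun_prop
    exact hGℓ.comp (f := fun u => max u (-1)) hmax.continuousWithinAt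
      fun u hu => max_le_max (mem_Ici.1 hu) le_rfl
  · simp [max_eq_left hs]

theorem stmt11_general (G : ℝ → ℝ)
    (hGcont : ContinuousOn G (Set.Icc (-1 : ℝ) 1))
    (hGmono : MonotoneOn G (Set.Icc (-1 : ℝ) 1))
    (x : ℝ → ℝ)
    (hx : ∃ (f : ℝ → ℝ) (ℓ : ℝ → ℝ), ContinuousOn f (Set.Ici (-1 : ℝ)) ∧ MemM ℓ ∧
      x = fun t => f t - G (ℓ t))
    (hcross : CrossingProp x)
    (xn : ℕ → ℝ → ℝ)
    (hxn : ∀ n, ∃ (f : ℝ → ℝ) (ℓ : ℝ → ℝ), ContinuousOn f (Set.Ici (-1 : ℝ)) ∧ MemM ℓ ∧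
      xn n = fun t => f t - G (ℓ t))
    (hconv : Filter.Tendsto (fun n => m1Dist (xn n) x) Filter.atTop (nhds 0)) :
    ∃ S : Set ℝ, S ⊆ Set.Ici (0 : ℝ) ∧ (Set.Ici (0 : ℝ) \ S).Countable ∧
      ∀ t ∈ S, Filter.Tendsto (fun n => lamT t (xn n)) Filter.atTop (nhds (lamT t x)) := by
  obtain ⟨f, M, hx'⟩ := exists_isContSubMono hGcont hGmono hx
  refine ⟨Ici 0 \ {(hitTime x).toReal}, sdiff_subset, ?_, fun t ht => ?_⟩
  · rw [sdiff_sdiff_right_self]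
    exact (countable_singleton _).mono inter_subset_right
  obtain ⟨ε, hε, hlam⟩ := hx'.exists_lamT_eq hcross ht.1 ht.2
  refine tendsto_const_nhds.congr' ((hconv.eventually (gt_mem_nhds hε)).mono fun n hn => ?_)
  obtain ⟨fn, Mn, hxn'⟩ := exists_isContSubMono hGcont hGmono (hxn n)
  exact (hlam _ _ _ hxn' hn).symm

/-- Lemma 4.1 (ii): if `x ∈ ι(Ξ)` satisfies the crossing property, then
for any sequence in `ι(Ξ)` converging to `x` in the M1 topology, the hitting-time indicators
`λ_t` converge for all `t ≥ 0` outside a countable set. -/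
theorem stmt11 (G : ℝ → ℝ)
    (hGcont : ContinuousOn G (Set.Icc (-1 : ℝ) 1))
    (hGmono : MonotoneOn G (Set.Icc (-1 : ℝ) 1)) (hG0 : G 0 = 0)
    (x : ℝ → ℝ)
    (hx : ∃ (f : ℝ → ℝ) (ℓ : ℝ → ℝ), ContinuousOn f (Set.Ici (-1 : ℝ)) ∧ MemM ℓ ∧
      x = fun t => f t - G (ℓ t))
    (hcross : CrossingProp x)
    (xn : ℕ → ℝ → ℝ)
    (hxn : ∀ n, ∃ (f : ℝ → ℝ) (ℓ : ℝ → ℝ), ContinuousOn f (Set.Ici (-1 : ℝ)) ∧ MemM ℓ ∧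
      xn n = fun t => f t - G (ℓ t))
    (hconv : Filter.Tendsto (fun n => m1Dist (xn n) x) Filter.atTop (nhds 0)) :
    ∃ S : Set ℝ, S ⊆ Set.Ici (0 : ℝ) ∧ (Set.Ici (0 : ℝ) \ S).Countable ∧
      ∀ t ∈ S, Filter.Tendsto (fun n => lamT t (xn n)) Filter.atTop (nhds (lamT t x)) :=
  stmt11_general G hGcont hGmono x hx hcross xn hxn hconv

end
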